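/- Strong completeness of IMCalc: for every set Γ of L-formulas and every L-formula φ, Γ ⊢_{IMCalc} φ if and only if Γ ⊩^{inm} φ. -/

import Mathlib

/-
Common formalisation of the syntax and semantics of the intuitionistic
monotone modal logic IM, its generalised Hilbert calculi, intuitionistic
neighbourhood models, IFOM-structures, and related constructions.
-/

namespace IMPaper

/-- Formulas of the monotone modal language L. -/
inductive Formula : Type
  | prop : ℕ → Formula
  | bot  : Formula
  | and  : Formula → Formula → Formula
  | or   : Formula → Formula → Formula
  | imp  : Formula → Formula → Formula
  | box  : Formula → Formula
  | dia  : Formula → Formula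
deriving DecidableEq

/-- Negation: ¬φ abbreviates φ → ⊥. -/
def Formula.neg (φ : Formula) : Formula := φ.imp .bot

/-- Top: ⊤ abbreviates ⊥ → ⊥. -/
def Formula.top : Formula := Formula.bot.imp .bot

/-- Substitution of formulas for proposition letters. -/
def Formula.subst (σ : ℕ → Formula) : Formula → Formula
  | .prop i   => σ i
  | .bot      => .bot
  | .and φ ψ  => .and (φ.subst σ) (ψ.subst σ)
  | .or φ ψ   => .or (φ.subst σ) (ψ.subst σ)
  | .imp φ ψ  => .imp (φ.subst σ) (ψ.subst σ)
  | .box φ    => .box (φ.subst σ)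
  | .dia φ    => .dia (φ.subst σ)

private def pp0 : Formula := .prop 0
private def pp1 : Formula := .prop 1
private def pp2 : Formula := .prop 2

/-- A standard axiomatisation of intuitionistic propositional logic. -/
def IpcAx : Set Formula :=
  { Formula.imp pp0 (.imp pp1 pp0),
    Formula.imp (.imp pp0 (.imp pp1 pp2)) (.imp (.imp pp0 pp1) (.imp pp0 pp2)),
    Formula.imp (.and pp0 pp1) pp0,
    Formula.imp (.and pp0 pp1) pp1,
    Formula.imp pp0 (.imp pp1 (.and pp0 pp1)),
    Formula.imp pp0 (.or pp0 pp1),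
    Formula.imp pp1 (.or pp0 pp1),
    Formula.imp (.imp pp0 pp2) (.imp (.imp pp1 pp2) (.imp (.or pp0 pp1) pp2)),
    Formula.imp .bot pp0 }

/-- All substitution instances of a set of formulas. -/
def Instances (Ax : Set Formula) : Set Formula :=
  {φ | ∃ ψ ∈ Ax, ∃ σ, φ = ψ.subst σ}

/-- 𝒜x: all substitution instances of Ax together with all substitution
instances of the axioms of intuitionistic propositional logic. -/
def ScrAx (Ax : Set Formula) : Set Formula := Instances Ax ∪ Instances IpcAx

/-- The generalised Hilbert calculus GHC(Ax). -/
inductive GHC (Ax : Set Formula) : Set Formula → Formula → Prop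
  | el {Γ : Set Formula} {φ : Formula} : φ ∈ Γ → GHC Ax Γ φ
  | ax {Γ : Set Formula} {φ : Formula} : φ ∈ ScrAx Ax → GHC Ax Γ φ
  | mp {Γ : Set Formula} {φ ψ : Formula} :
      GHC Ax Γ φ → GHC Ax Γ (φ.imp ψ) → GHC Ax Γ ψ
  | monBox {Γ : Set Formula} {φ ψ : Formula} :
      GHC Ax ∅ (φ.imp ψ) → GHC Ax Γ ((Formula.box φ).imp (Formula.box ψ))
  | monDia {Γ : Set Formula} {φ ψ : Formula} :
      GHC Ax ∅ (φ.imp ψ) → GHC Ax Γ ((Formula.dia φ).imp (Formula.dia ψ))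

/-- The axioms (neg_a) and (I_◇) of the calculus IMCalc. -/
def IMAx : Set Formula :=
  { Formula.imp ((Formula.box pp0).and (Formula.dia pp0.neg)) .bot,
    Formula.imp ((Formula.box Formula.top).imp (Formula.dia pp0)) (Formula.dia pp0) }

/-- Derivability in the calculus IMCalc = GHC({(□p ∧ ◇¬p) → ⊥, (□⊤ → ◇p) → ◇p}). -/
def IMC : Set Formula → Formula → Prop := GHC IMAx

/-- An intuitionistic neighbourhood: a partial function W ⇀ 𝒫(W), encoded as a
domain together with a (total) value function whose values matter on the domain. -/
structure Nbhd (W : Type) where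
  dom : Set W
  val : W → Set W

/-- The data of an intuitionistic neighbourhood model. -/
structure INStruct (W : Type) where
  le : W → W → Prop
  N : Set (Nbhd W)
  V : ℕ → Set W

variable {W W' : Type}

/-- A set is upward closed w.r.t. the order of the structure. -/
def INStruct.Up (M : INStruct W) (s : Set W) : Prop :=
  ∀ ⦃w v : W⦄, M.le w v → w ∈ s → v ∈ s

/-- `M` is an intuitionistic neighbourhood model: the order is a partial order,
the domain of every neighbourhood is upward closed, and the valuation assigns
upward closed sets to proposition letters. -/
def INStruct.IsModel (M : INStruct W) : Prop :=
  IsPartialOrder W M.le ∧ (∀ a ∈ M.N, M.Up a.dom) ∧ ∀ i, M.Up (M.V i)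

/-- Truth of a formula at a world of an intuitionistic neighbourhood model. -/
def INStruct.sat (M : INStruct W) : Formula → W → Prop
  | .prop i, w  => w ∈ M.V i
  | .bot, _     => False
  | .and φ ψ, w => M.sat φ w ∧ M.sat ψ w
  | .or φ ψ, w  => M.sat φ w ∨ M.sat ψ w
  | .imp φ ψ, w => ∀ v, M.le w v → M.sat φ v → M.sat ψ v
  | .box φ, w   => ∃ a ∈ M.N, w ∈ a.dom ∧
      ∀ w', M.le w w' → ∀ v ∈ a.val w', M.sat φ v
  | .dia φ, w   => ∀ w', M.le w w' → ∀ a ∈ M.N, w' ∈ a.dom →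
      ∃ v ∈ a.val w', M.sat φ v

/-- Semantic consequence over the class of all intuitionistic neighbourhood models. -/
def INConseq (Γ : Set Formula) (φ : Formula) : Prop :=
  ∀ (W : Type) (M : INStruct W), M.IsModel →
    ∀ w : W, (∀ ψ ∈ Γ, M.sat ψ w) → M.sat φ w

/-- A coherent intuitionistic neighbourhood: conditions (N1) and (N2). -/
def INStruct.CoherentNbhd (M : INStruct W) (a : Nbhd W) : Prop :=
  (∀ ⦃w w' : W⦄, M.le w w' → w ∈ a.dom → ∀ v ∈ a.val w, ∃ v' ∈ a.val w', M.le v v') ∧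
  (∀ ⦃w : W⦄, w ∈ a.dom → ∀ v ∈ a.val w, ∀ v', M.le v v' →
      ∃ w', M.le w w' ∧ v' ∈ a.val w')

/-- A model is coherent if all its intuitionistic neighbourhoods are coherent. -/
def INStruct.Coherent (M : INStruct W) : Prop := ∀ a ∈ M.N, M.CoherentNbhd a

/-- Semantic consequence over the class of coherent intuitionistic neighbourhood models. -/
def CohConseq (Γ : Set Formula) (φ : Formula) : Prop :=
  ∀ (W : Type) (M : INStruct W), M.IsModel → M.Coherent →
    ∀ w : W, (∀ ψ ∈ Γ, M.sat ψ w) → M.sat φ w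

/-- The relation R: w R v iff v ∈ a(w) for some neighbourhood a of w. -/
def INStruct.R (M : INStruct W) (w v : W) : Prop :=
  ∃ a ∈ M.N, w ∈ a.dom ∧ v ∈ a.val w

/-- R~-Cartesian: w ≤~ v R~ w implies w = v (with ~ the equivalence closures). -/
def INStruct.RCartesian (M : INStruct W) : Prop :=
  ∀ w v, Relation.EqvGen M.le w v → Relation.EqvGen M.R v w → w = v

/-- N-Cartesian: w R~ v and w, v ∈ dom(a) imply a(w) = a(v). -/
def INStruct.NCartesian (M : INStruct W) : Prop :=
  ∀ a ∈ M.N, ∀ w v, Relation.EqvGen M.R w v → w ∈ a.dom → v ∈ a.dom →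
    a.val w = a.val v

/-- Cartesian: both R~-Cartesian and N-Cartesian. -/
def INStruct.Cartesian (M : INStruct W) : Prop := M.RCartesian ∧ M.NCartesian

/-- Isomorphism of intuitionistic neighbourhood structures. -/
def Isomorphic (M : INStruct W) (M' : INStruct W') : Prop :=
  ∃ (α : W → W') (ν : Nbhd W → Nbhd W'),
    Function.Bijective α ∧ Set.BijOn ν M.N M'.N ∧
    (∀ w v, M.le w v ↔ M'.le (α w) (α v)) ∧
    (∀ a ∈ M.N, ∀ w, w ∈ a.dom ↔ α w ∈ (ν a).dom) ∧
    (∀ a ∈ M.N, ∀ u ∈ a.dom, ∀ w, w ∈ a.val u ↔ α w ∈ (ν a).val (α u)) ∧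
    (∀ i w, w ∈ M.V i ↔ α w ∈ M'.V i)

end IMPaper
namespace IMPaper

/-!
Soundness is an induction on derivations. For completeness, Lindenbaum's lemma extends an
underivable consecution `Γ ⊬ φ` to a prime theory, and the canonical model lives on prime theories.
It has two families of neighbourhoods: for each `χ`, the one sending a theory containing `□χ` to
the theories containing `χ`, which makes every `□χ` of a theory true; and for each `ψ`, one defined
on the theories containing `□⊤` that refutes `◇ψ` wherever `◇ψ` is absent. Axiom (neg_a) makes
every diamond of a theory compatible with the first family, and (I_◇) ensures that `◇ψ` stays
underivable after adding `□⊤`. Each prime theory is copied along `ℕ` so that the second family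
does not force spurious boxes: at odd copies its neighbourhoods are the whole model, so a box
forced through them is a theorem and follows from `□⊤`.
-/

open Set

def subst3 (A B C : Formula) : ℕ → Formula
  | 0 => A
  | 1 => B
  | _ => C

namespace GHC

variable {Ax Γ Δ : Set Formula} {φ ψ χ : Formula}

theorem of_mem_ipcAx (hψ : ψ ∈ IpcAx) (σ : ℕ → Formula) : GHC Ax Γ (ψ.subst σ) :=
  ax (Or.inr ⟨ψ, hψ, σ, rfl⟩)

theorem of_mem_axioms (hψ : ψ ∈ Ax) (σ : ℕ → Formula) : GHC Ax Γ (ψ.subst σ) :=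
  ax (Or.inl ⟨ψ, hψ, σ, rfl⟩)

theorem ax_k : GHC Ax Γ (φ.imp (ψ.imp φ)) :=
  of_mem_ipcAx (ψ := pp0.imp (pp1.imp pp0)) (by simp [IpcAx]) (subst3 φ ψ φ)

theorem ax_s : GHC Ax Γ ((φ.imp (ψ.imp χ)).imp ((φ.imp ψ).imp (φ.imp χ))) :=
  of_mem_ipcAx (ψ := (pp0.imp (pp1.imp pp2)).imp ((pp0.imp pp1).imp (pp0.imp pp2)))
    (by simp [IpcAx]) (subst3 φ ψ χ)

theorem ax_and_left : GHC Ax Γ ((φ.and ψ).imp φ) :=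
  of_mem_ipcAx (ψ := (pp0.and pp1).imp pp0) (by simp [IpcAx]) (subst3 φ ψ φ)

theorem ax_and_right : GHC Ax Γ ((φ.and ψ).imp ψ) :=
  of_mem_ipcAx (ψ := (pp0.and pp1).imp pp1) (by simp [IpcAx]) (subst3 φ ψ φ)

theorem ax_and_intro : GHC Ax Γ (φ.imp (ψ.imp (φ.and ψ))) :=
  of_mem_ipcAx (ψ := pp0.imp (pp1.imp (pp0.and pp1))) (by simp [IpcAx]) (subst3 φ ψ φ)

theorem ax_or_inl : GHC Ax Γ (φ.imp (φ.or ψ)) :=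
  of_mem_ipcAx (ψ := pp0.imp (pp0.or pp1)) (by simp [IpcAx]) (subst3 φ ψ φ)

theorem ax_or_inr : GHC Ax Γ (ψ.imp (φ.or ψ)) :=
  of_mem_ipcAx (ψ := pp1.imp (pp0.or pp1)) (by simp [IpcAx]) (subst3 φ ψ φ)

theorem ax_or_elim : GHC Ax Γ ((φ.imp χ).imp ((ψ.imp χ).imp ((φ.or ψ).imp χ))) :=
  of_mem_ipcAx (ψ := (pp0.imp pp2).imp ((pp1.imp pp2).imp ((pp0.or pp1).imp pp2)))
    (by simp [IpcAx]) (subst3 φ ψ χ)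

theorem ax_efq : GHC Ax Γ (Formula.bot.imp φ) :=
  of_mem_ipcAx (ψ := Formula.bot.imp pp0) (by simp [IpcAx]) (subst3 φ φ φ)

theorem ax_neg_a : GHC IMAx Γ ((φ.box.and φ.neg.dia).imp .bot) :=
  of_mem_axioms (ψ := ((Formula.box pp0).and (Formula.dia pp0.neg)).imp .bot) (by simp [IMAx])
    (subst3 φ φ φ)

theorem ax_i_dia : GHC IMAx Γ ((Formula.top.box.imp φ.dia).imp φ.dia) :=
  of_mem_axioms (ψ := (Formula.top.box.imp (Formula.dia pp0)).imp (Formula.dia pp0))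
    (by simp [IMAx]) (subst3 φ φ φ)

theorem imp_self : GHC Ax Γ (φ.imp φ) :=
  mp (ax_k (ψ := φ)) (mp (ax_k (ψ := φ.imp φ)) ax_s)

theorem and_intro (hφ : GHC Ax Γ φ) (hψ : GHC Ax Γ ψ) : GHC Ax Γ (φ.and ψ) :=
  mp hψ (mp hφ ax_and_intro)

theorem mono (hΓΔ : Γ ⊆ Δ) (h : GHC Ax Γ φ) : GHC Ax Δ φ := by
  induction h with
  | el h => exact el (hΓΔ h)
  | ax h => exact ax h
  | mp _ _ ih₁ ih₂ => exact mp (ih₁ hΓΔ) (ih₂ hΓΔ)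
  | monBox h => exact monBox h
  | monDia h => exact monDia h

theorem deduction (h : GHC Ax (insert φ Γ) ψ) : GHC Ax Γ (φ.imp ψ) := by
  generalize hΔ : insert φ Γ = Δ at h
  induction h with
  | el h =>
    subst hΔ
    obtain rfl | h := h
    · exact imp_self
    · exact mp (el h) ax_k
  | ax h => exact mp (ax h) ax_k
  | mp _ _ ih₁ ih₂ => exact mp (ih₁ hΔ) (mp (ih₂ hΔ) ax_s)
  | monBox h => exact mp (monBox h) ax_k
  | monDia h => exact mp (monDia h) ax_k

theorem exists_finite (h : GHC Ax Γ φ) : ∃ Γ₀ ⊆ Γ, Γ₀.Finite ∧ GHC Ax Γ₀ φ := by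
  induction h with
  | @el Γ φ h => exact ⟨{φ}, singleton_subset_iff.2 h, finite_singleton φ, el rfl⟩
  | ax h => exact ⟨∅, empty_subset _, finite_empty, ax h⟩
  | mp _ _ ih₁ ih₂ =>
    obtain ⟨Γ₁, hΓ₁, hfin₁, h₁⟩ := ih₁
    obtain ⟨Γ₂, hΓ₂, hfin₂, h₂⟩ := ih₂
    exact ⟨Γ₁ ∪ Γ₂, union_subset hΓ₁ hΓ₂, hfin₁.union hfin₂,
      mp (h₁.mono subset_union_left) (h₂.mono subset_union_right)⟩
  | monBox h => exact ⟨∅, empty_subset _, finite_empty, monBox h⟩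
  | monDia h => exact ⟨∅, empty_subset _, finite_empty, monDia h⟩

theorem not_derives_sUnion {c : Set (Set Formula)} (hc : ∀ Δ ∈ c, ¬ GHC Ax Δ φ)
    (hchain : IsChain (· ⊆ ·) c) (hne : c.Nonempty) : ¬ GHC Ax (⋃₀ c) φ := by
  intro h
  obtain ⟨Γ₀, hΓ₀, hfin, h₀⟩ := h.exists_finite
  obtain ⟨Δ, hΔ, hΓ₀Δ⟩ :=
    hchain.directedOn.exists_mem_subset_of_finite_of_subset_sUnion hne hfin hΓ₀
  exact hc Δ hΔ (h₀.mono hΓ₀Δ)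

end GHC

open GHC

structure IsPrimeTheory (Ax T : Set Formula) : Prop where
  closed : ∀ {φ}, GHC Ax T φ → φ ∈ T
  bot_notMem : Formula.bot ∉ T
  mem_or_mem : ∀ {φ ψ}, φ.or ψ ∈ T → φ ∈ T ∨ ψ ∈ T

namespace IsPrimeTheory

variable {Ax Γ T : Set Formula} {φ ψ χ : Formula}

theorem mp_mem (hT : IsPrimeTheory Ax T) (hφ : φ ∈ T) (h : φ.imp ψ ∈ T) : ψ ∈ T :=
  hT.closed (mp (el hφ) (el h))

theorem and_mem_iff (hT : IsPrimeTheory Ax T) : φ.and ψ ∈ T ↔ φ ∈ T ∧ ψ ∈ T :=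
  ⟨fun h => ⟨hT.closed (mp (el h) ax_and_left), hT.closed (mp (el h) ax_and_right)⟩,
    fun h => hT.closed (and_intro (el h.1) (el h.2))⟩

theorem or_mem_iff (hT : IsPrimeTheory Ax T) : φ.or ψ ∈ T ↔ φ ∈ T ∨ ψ ∈ T :=
  ⟨hT.mem_or_mem, fun h => h.elim (fun h => hT.closed (mp (el h) ax_or_inl))
    (fun h => hT.closed (mp (el h) ax_or_inr))⟩

theorem box_mem_of_imp (hT : IsPrimeTheory Ax T) (h : GHC Ax ∅ (χ.imp φ)) (hχ : χ.box ∈ T) :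
    φ.box ∈ T :=
  hT.closed (mp (el hχ) (monBox h))

end IsPrimeTheory

section Lindenbaum

variable {Ax Γ : Set Formula} {φ ψ χ : Formula}

theorem exists_isPrimeTheory_superset (h : ¬ GHC Ax Γ φ) :
    ∃ T, IsPrimeTheory Ax T ∧ Γ ⊆ T ∧ ¬ GHC Ax T φ := by
  obtain ⟨T, hΓT, hT⟩ := zorn_subset_nonempty {Δ | ¬ GHC Ax Δ φ}
    (fun c hc hchain hne => ⟨⋃₀ c, not_derives_sUnion hc hchain hne,
      fun _ => subset_sUnion_of_mem⟩) Γ h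
  have imp_of_notMem {ψ} (hψ : ψ ∉ T) : GHC Ax T (ψ.imp φ) :=
    deduction (by_contra fun hd => hψ (hT.mem_of_prop_insert hd))
  refine ⟨T, ⟨fun {ψ} hψ => ?_, fun hbot => hT.prop (mp (el hbot) ax_efq), fun {ψ χ} h => ?_⟩,
    hΓT, hT.prop⟩
  · by_contra hψT
    exact hT.prop (mp hψ (imp_of_notMem hψT))
  · by_contra! hψχ
    exact hT.prop (mp (el h) (mp (imp_of_notMem hψχ.2) (mp (imp_of_notMem hψχ.1) ax_or_elim)))

theorem derives_of_forall_isPrimeTheory (h : ∀ T, IsPrimeTheory Ax T → Γ ⊆ T → φ ∈ T) :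
    GHC Ax Γ φ := by
  by_contra hφ
  obtain ⟨T, hT, hΓT, hφT⟩ := exists_isPrimeTheory_superset hφ
  exact hφT (el (h T hT hΓT))

theorem IsPrimeTheory.exists_mem_notMem_of_dia {T : Set Formula} (hT : IsPrimeTheory Ax T)
    (hφ : φ.dia ∈ T) (hψ : ψ.dia ∉ T) : ∃ R, IsPrimeTheory Ax R ∧ φ ∈ R ∧ ψ ∉ R := by
  have : ¬ GHC Ax (insert φ ∅) ψ := fun h => hψ (hT.closed (mp (el hφ) (monDia (deduction h))))
  obtain ⟨R, hR, hφR, hψR⟩ := exists_isPrimeTheory_superset this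
  exact ⟨R, hR, hφR (mem_insert φ ∅), fun h => hψR (el h)⟩

theorem IsPrimeTheory.exists_mem_mem_of_box_of_dia {T : Set Formula} (hT : IsPrimeTheory IMAx T)
    (hχ : χ.box ∈ T) (hφ : φ.dia ∈ T) : ∃ R, IsPrimeTheory IMAx R ∧ χ ∈ R ∧ φ ∈ R := by
  have : ¬ GHC IMAx (insert χ (insert φ ∅)) .bot := fun h => by
    have hχφ : χ.neg.dia ∈ T := hT.closed (mp (el hφ) (monDia (deduction (deduction h))))
    exact hT.bot_notMem (hT.closed (mp (and_intro (el hχ) (el hχφ)) ax_neg_a))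
  obtain ⟨R, hR, hχφR, -⟩ := exists_isPrimeTheory_superset this
  exact ⟨R, hR, hχφR (mem_insert _ _), hχφR (mem_insert_of_mem _ (mem_insert _ _))⟩

end Lindenbaum

@[ext]
structure CanonicalWorld where
  theory : Set Formula
  isPrime : IsPrimeTheory IMAx theory
  index : ℕ

def boxNbhd (χ : Formula) : Nbhd CanonicalWorld :=
  ⟨{x | χ.box ∈ x.theory}, fun _ => {y | χ ∈ y.theory}⟩

def diaNbhd (ψ : Formula) : Nbhd CanonicalWorld :=
  ⟨{x | Formula.top.box ∈ x.theory},
    fun x => {y | x.index % 2 = 1 ∨ (ψ ∈ y.theory → ψ.dia ∈ x.theory)}⟩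

def canonicalModel : INStruct CanonicalWorld where
  le x y := x.theory ⊆ y.theory ∧ x.index ≤ y.index
  N := range boxNbhd ∪ range diaNbhd
  V i := {x | .prop i ∈ x.theory}

theorem canonicalModel_isModel : canonicalModel.IsModel := by
  refine ⟨{ refl := fun x => ⟨subset_rfl, le_rfl⟩
            trans := fun x y z h₁ h₂ => ⟨h₁.1.trans h₂.1, h₁.2.trans h₂.2⟩
            antisymm := fun x y h₁ h₂ =>
              CanonicalWorld.ext (h₁.1.antisymm h₂.1) (le_antisymm h₁.2 h₂.2) }, ?_,
    fun i x y hxy hx => hxy.1 hx⟩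
  rintro a (⟨χ, rfl⟩ | ⟨ψ, rfl⟩) x y hxy hx <;> exact hxy.1 hx

section TruthLemma

variable {φ ψ : Formula}

theorem canonicalModel_sat_imp_iff (ihφ : ∀ x, canonicalModel.sat φ x ↔ φ ∈ x.theory)
    (ihψ : ∀ x, canonicalModel.sat ψ x ↔ ψ ∈ x.theory) (x : CanonicalWorld) :
    canonicalModel.sat (φ.imp ψ) x ↔ φ.imp ψ ∈ x.theory := by
  refine ⟨fun h => ?_, fun h y hxy hφ => (ihψ y).2 (y.isPrime.mp_mem ((ihφ y).1 hφ) (hxy.1 h))⟩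
  by_contra hx
  have : ¬ GHC IMAx (insert φ x.theory) ψ := fun hd => hx (x.isPrime.closed (deduction hd))
  obtain ⟨S, hS, hxS, hψS⟩ := exists_isPrimeTheory_superset this
  let y : CanonicalWorld := ⟨S, hS, x.index⟩
  have hφy : canonicalModel.sat φ y := (ihφ y).2 (hxS (mem_insert _ _))
  exact hψS (el ((ihψ y).1 (h y ⟨(subset_insert _ _).trans hxS, le_rfl⟩ hφy)))

theorem canonicalModel_sat_box_iff (ih : ∀ x, canonicalModel.sat φ x ↔ φ ∈ x.theory)
    (x : CanonicalWorld) : canonicalModel.sat φ.box x ↔ φ.box ∈ x.theory := by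
  refine ⟨?_, fun h => ⟨boxNbhd φ, Or.inl ⟨φ, rfl⟩, h, fun _ _ v hv => (ih v).2 hv⟩⟩
  rintro ⟨a, ⟨χ, rfl⟩ | ⟨ψ, rfl⟩, hdom, hval⟩
  · refine x.isPrime.box_mem_of_imp
      (deduction (derives_of_forall_isPrimeTheory fun S hS hχS => ?_)) hdom
    exact (ih ⟨S, hS, 0⟩).1 (hval x ⟨subset_rfl, le_rfl⟩ _ (hχS (mem_insert _ _)))
  · refine x.isPrime.box_mem_of_imp (χ := .top)
      (deduction (derives_of_forall_isPrimeTheory fun S hS _ => ?_)) hdom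
    exact (ih ⟨S, hS, 0⟩).1 (hval ⟨x.theory, x.isPrime, 2 * x.index + 1⟩
      ⟨subset_rfl, by dsimp only; omega⟩ _ (Or.inl (by dsimp only; omega)))

theorem canonicalModel_sat_dia_iff (ih : ∀ x, canonicalModel.sat φ x ↔ φ ∈ x.theory)
    (x : CanonicalWorld) : canonicalModel.sat φ.dia x ↔ φ.dia ∈ x.theory := by
  constructor
  · intro h
    by_contra hx
    have : ¬ GHC IMAx (insert Formula.top.box x.theory) φ.dia := fun hd =>
      hx (x.isPrime.closed (mp (deduction hd) ax_i_dia))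
    obtain ⟨U, hU, hxU, hφU⟩ := exists_isPrimeTheory_superset this
    obtain ⟨v, hv, hφv⟩ := h ⟨U, hU, 2 * x.index + 2⟩ ⟨(subset_insert _ _).trans hxU, by dsimp only; omega⟩
      (diaNbhd φ) (Or.inr ⟨φ, rfl⟩) (hxU (mem_insert _ _))
    exact hφU (el ((hv.resolve_left (by dsimp only; omega)) ((ih v).1 hφv)))
  · intro h y hxy a ha hdom
    have hy : φ.dia ∈ y.theory := hxy.1 h
    obtain ⟨χ, rfl⟩ | ⟨ψ, rfl⟩ := ha
    · obtain ⟨R, hR, hχR, hφR⟩ := y.isPrime.exists_mem_mem_of_box_of_dia hdom hy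
      exact ⟨⟨R, hR, 0⟩, hχR, (ih _).2 hφR⟩
    · by_cases hψ : ψ.dia ∈ y.theory
      · obtain ⟨R, hR, -, hφR⟩ := y.isPrime.exists_mem_mem_of_box_of_dia hdom hy
        exact ⟨⟨R, hR, 0⟩, Or.inr fun _ => hψ, (ih _).2 hφR⟩
      · obtain ⟨R, hR, hφR, hψR⟩ := y.isPrime.exists_mem_notMem_of_dia hy hψ
        exact ⟨⟨R, hR, 0⟩, Or.inr fun h => absurd h hψR, (ih _).2 hφR⟩

end TruthLemma

theorem canonicalModel_sat_iff :
    ∀ (φ : Formula) (x : CanonicalWorld), canonicalModel.sat φ x ↔ φ ∈ x.theory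
  | .prop _, _ => Iff.rfl
  | .bot, x => ⟨False.elim, fun h => x.isPrime.bot_notMem h⟩
  | .and φ ψ, x =>
    (and_congr (canonicalModel_sat_iff φ x) (canonicalModel_sat_iff ψ x)).trans
      x.isPrime.and_mem_iff.symm
  | .or φ ψ, x =>
    (or_congr (canonicalModel_sat_iff φ x) (canonicalModel_sat_iff ψ x)).trans
      x.isPrime.or_mem_iff.symm
  | .imp φ ψ, x =>
    canonicalModel_sat_imp_iff (canonicalModel_sat_iff φ) (canonicalModel_sat_iff ψ) x
  | .box φ, x => canonicalModel_sat_box_iff (canonicalModel_sat_iff φ) x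
  | .dia φ, x => canonicalModel_sat_dia_iff (canonicalModel_sat_iff φ) x

namespace INStruct.IsModel

variable {M : INStruct W} {Ax Γ : Set Formula} {φ ψ : Formula}

theorem le_refl (hM : M.IsModel) (w : W) : M.le w w := hM.1.refl w

theorem le_trans (hM : M.IsModel) {u v w : W} (huv : M.le u v) (hvw : M.le v w) : M.le u w :=
  hM.1.trans _ _ _ huv hvw

theorem sat_mono (hM : M.IsModel) : ∀ (φ : Formula) {w v : W}, M.le w v → M.sat φ w → M.sat φ v
  | .prop i, _, _, h, hw => hM.2.2 i h hw
  | .bot, _, _, _, hw => hw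
  | .and φ ψ, _, _, h, hw => ⟨hM.sat_mono φ h hw.1, hM.sat_mono ψ h hw.2⟩
  | .or φ ψ, _, _, h, hw => hw.imp (hM.sat_mono φ h) (hM.sat_mono ψ h)
  | .imp _ _, _, _, h, hw => fun u hu => hw u (hM.le_trans h hu)
  | .box _, _, _, h, ⟨a, ha, hdom, hval⟩ =>
    ⟨a, ha, hM.2.1 a ha h hdom, fun w' hw' => hval w' (hM.le_trans h hw')⟩
  | .dia _, _, _, h, hw => fun w' hw' => hw w' (hM.le_trans h hw')

theorem sat_of_mem_instances_ipcAx (hM : M.IsModel) (hψ : ψ ∈ Instances IpcAx) (w : W) :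
    M.sat ψ w := by
  obtain ⟨ψ, hψ, σ, rfl⟩ := hψ
  simp only [IpcAx, mem_insert_iff, mem_singleton_iff] at hψ
  obtain rfl | rfl | rfl | rfl | rfl | rfl | rfl | rfl | rfl := hψ
  · exact fun v _ h₀ v' hvv' _ => hM.sat_mono _ hvv' h₀
  · exact fun v _ h₀₁₂ v' hvv' h₀₁ u hv'u h₀ =>
      h₀₁₂ u (hM.le_trans hvv' hv'u) h₀ u (hM.le_refl u) (h₀₁ u hv'u h₀)
  · exact fun v _ h => h.1
  · exact fun v _ h => h.2
  · exact fun v _ h₀ v' hvv' h₁ => ⟨hM.sat_mono _ hvv' h₀, h₁⟩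
  · exact fun v _ h => Or.inl h
  · exact fun v _ h => Or.inr h
  · exact fun v _ h₀₂ v' hvv' h₁₂ u hv'u h₀₁ =>
      h₀₁.elim (h₀₂ u (hM.le_trans hvv' hv'u)) (h₁₂ u hv'u)
  · exact fun v _ h => h.elim

theorem sat_of_mem_instances_imAx (hM : M.IsModel) (hψ : ψ ∈ Instances IMAx) (w : W) :
    M.sat ψ w := by
  obtain ⟨ψ, hψ, σ, rfl⟩ := hψ
  simp only [IMAx, mem_insert_iff, mem_singleton_iff] at hψ
  obtain rfl | rfl := hψ
  · rintro v - ⟨⟨a, ha, hdom, hval⟩, hdia⟩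
    obtain ⟨u, hu, hnot⟩ := hdia v (hM.le_refl v) a ha hdom
    exact hnot u (hM.le_refl u) (hval v (hM.le_refl v) u hu)
  · intro v _ h w' hvw' a ha hdom
    exact h w' hvw' ⟨a, ha, hdom, fun _ _ _ _ _ _ h => h⟩ w' (hM.le_refl w') a ha hdom

theorem sat_of_derives (hM : M.IsModel) (hAx : ∀ ψ ∈ Instances Ax, ∀ w, M.sat ψ w)
    (h : GHC Ax Γ φ) {w : W} (hΓ : ∀ ψ ∈ Γ, M.sat ψ w) : M.sat φ w := by
  induction h generalizing w with
  | el h => exact hΓ _ h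
  | ax h => exact h.elim (hAx _ · w) (hM.sat_of_mem_instances_ipcAx · w)
  | mp _ _ ih₁ ih₂ => exact ih₂ hΓ w (hM.le_refl w) (ih₁ hΓ)
  | monBox _ ih =>
    rintro v - ⟨a, ha, hdom, hval⟩
    exact ⟨a, ha, hdom, fun w' hw' u hu =>
      ih (w := u) (fun _ => False.elim) u (hM.le_refl u) (hval w' hw' u hu)⟩
  | monDia _ ih =>
    intro v _ hdia w' hw' a ha hdom
    obtain ⟨u, hu, hφ⟩ := hdia w' hw' a ha hdom
    exact ⟨u, hu, ih (w := u) (fun _ => False.elim) u (hM.le_refl u) hφ⟩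

end INStruct.IsModel

theorem inConseq_of_imc {Γ : Set Formula} {φ : Formula} (h : IMC Γ φ) : INConseq Γ φ :=
  fun _ _ hM _ hΓ => hM.sat_of_derives (fun _ hψ => hM.sat_of_mem_instances_imAx hψ) h hΓ

theorem imc_of_inConseq {Γ : Set Formula} {φ : Formula} (h : INConseq Γ φ) : IMC Γ φ := by
  by_contra hφ
  obtain ⟨T, hT, hΓT, hφT⟩ := exists_isPrimeTheory_superset hφ
  let x : CanonicalWorld := ⟨T, hT, 0⟩
  have hx : canonicalModel.sat φ x :=
    h _ _ canonicalModel_isModel x fun ψ hψ => (canonicalModel_sat_iff ψ x).2 (hΓT hψ)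
  exact hφT (el ((canonicalModel_sat_iff φ x).1 hx))

/-- Strong completeness of IMCalc: Γ ⊢_{IMCalc} φ iff Γ ⊩^{inm} φ. -/
theorem imcalc_complete (Γ : Set Formula) (φ : Formula) :
    IMC Γ φ ↔ INConseq Γ φ :=
  ⟨inConseq_of_imc, imc_of_inConseq⟩

end IMPaper
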